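/- arXiv:2012.02847 — 3 statements merged into one kernel-verified Lean document; each statement's English description precedes it below -/
import Mathlib

section
/- Let N, n, m be positive reals with 1 ≤ n ≤ N, 1 < m < N, n < m, let 0 ≤ p ≤ 1, 0 ≤ q ≤ p, α ∈ [0,1]. Define p' = 1 − (1−pα)^n and q' = 1 − (1−qα)^n (n a positive integer). Then (m−1)(p' − pα) + (N−m)(q' − qα) + (n−1)(1 − p') ≥ 0. -/
/-! Each of the three summands is nonnegative: the probability `1 - (1 - x) ^ n` of at least one
success in `n ≥ 1` independent trials of success probability `x` is at least `x`. -/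

lemma le_one_sub_one_sub_pow {x : ℝ} {n : ℕ} (hx0 : 0 ≤ x) (hx1 : x ≤ 1) (hn : n ≠ 0) :
    x ≤ 1 - (1 - x) ^ n := by
  have : (1 - x) ^ n ≤ 1 - x := pow_le_of_le_one (by linarith) (by linarith) hn
  linarith

lemma mul_mem_Icc_zero_one {a b : ℝ} (ha0 : 0 ≤ a) (ha1 : a ≤ 1) (hb0 : 0 ≤ b) (hb1 : b ≤ 1) :
    0 ≤ a * b ∧ a * b ≤ 1 :=
  ⟨mul_nonneg ha0 hb0, mul_le_one₀ ha1 hb0 hb1⟩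

theorem lower_bound_case2_general (N m p q α : ℝ) (n : ℕ)
    (hn1 : 1 ≤ (n : ℝ))
    (hm1 : 1 < m) (hmN : m < N)
    (hp0 : 0 ≤ p) (hp1 : p ≤ 1) (hq0 : 0 ≤ q) (hqp : q ≤ p)
    (hα0 : 0 ≤ α) (hα1 : α ≤ 1) :
    0 ≤ (m - 1) * ((1 - (1 - p * α) ^ n) - p * α) +
        (N - m) * ((1 - (1 - q * α) ^ n) - q * α) +
        ((n : ℝ) - 1) * (1 - (1 - (1 - p * α) ^ n)) := by
  have hn : n ≠ 0 := by
    rintro rfl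
    norm_num at hn1
  obtain ⟨hpα0, hpα1⟩ := mul_mem_Icc_zero_one hp0 hp1 hα0 hα1
  obtain ⟨hqα0, hqα1⟩ := mul_mem_Icc_zero_one hq0 (hqp.trans hp1) hα0 hα1
  have hp' := le_one_sub_one_sub_pow hpα0 hpα1 hn
  have hq' := le_one_sub_one_sub_pow hqα0 hqα1 hn
  refine add_nonneg (add_nonneg ?_ ?_) ?_
  · exact mul_nonneg (by linarith) (by linarith)
  · exact mul_nonneg (by linarith) (by linarith)
  · rw [sub_sub_cancel]
    exact mul_nonneg (by linarith) (pow_nonneg (by linarith) n)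

theorem lower_bound_case2 (N m p q α : ℝ) (n : ℕ)
    (hn1 : 1 ≤ (n : ℝ)) (hnN : (n : ℝ) ≤ N)
    (hm1 : 1 < m) (hmN : m < N) (hnm : (n : ℝ) < m)
    (hp0 : 0 ≤ p) (hp1 : p ≤ 1) (hq0 : 0 ≤ q) (hqp : q ≤ p)
    (hα0 : 0 ≤ α) (hα1 : α ≤ 1) :
    0 ≤ (m - 1) * ((1 - (1 - p * α) ^ n) - p * α) +
        (N - m) * ((1 - (1 - q * α) ^ n) - q * α) +
        ((n : ℝ) - 1) * (1 - (1 - (1 - p * α) ^ n)) :=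
  lower_bound_case2_general N m p q α n hn1 hm1 hmN hp0 hp1 hq0 hqp hα0 hα1
end

section
/- Let N > n ≥ m > 1, p > 0, v > 0, with (m−1)p + (N−m)q > 0 and q·(N−1)·v ≤ ((m−1)p + (N−m)q) for all q in [0,p] (i.e., q·α(q) ≤ 1). Then the derivative with respect to q of g(q) = 1 − (1 − q·α(q))^n, where α(q) = (N−1)v/((m−1)p + (N−m)q), equals n·v·p·(N−1)·(m−1)·(1 − q·α(q))^(n−1) / ((m−1)p + (N−m)q)^2, which is nonnegative. -/
/-!
Write `g(x) = 1 - (1 - u x)^n` with `u x = x c / (a + b x)`, `a = (m-1)p`, `b = N-m`, `c = (N-1)v`.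
By the quotient rule `u' = c a / (a + b x)^2`, and the chain rule gives
`g' = n (1 - u x)^(n-1) u'`. Every factor is nonnegative: `a, c > 0` since `N > n ≥ m > 1`,
and `1 - u q ≥ 0` is the calibration `q α(q) ≤ 1`.
-/

theorem hasDerivAt_mul_div_affine {𝕜 : Type*} [NontriviallyNormedField 𝕜] {a b c x : 𝕜}
    (hx : a + b * x ≠ 0) :
    HasDerivAt (fun y => y * (c / (a + b * y))) (c * a / (a + b * x) ^ 2) x := by
  have hden : HasDerivAt (fun y => a + b * y) b x := by
    simpa using ((hasDerivAt_id x).const_mul b).const_add a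
  simp_rw [← mul_div_assoc]
  exact (((hasDerivAt_id' x).mul_const c).fun_div hden hx).congr_deriv (by ring)

theorem HasDerivAt.one_sub_one_sub_pow {𝕜 : Type*} [NontriviallyNormedField 𝕜] {f : 𝕜 → 𝕜}
    {f' x : 𝕜} (hf : HasDerivAt f f' x) (n : ℕ) :
    HasDerivAt (fun y => 1 - (1 - f y) ^ n) (n * (1 - f x) ^ (n - 1) * f') x :=
  (((hf.const_sub 1).fun_pow n).const_sub 1).congr_deriv (by ring)

theorem mul_div_le_one_of_mul_le {𝕜 : Type*} [Field 𝕜] [LinearOrder 𝕜] [IsStrictOrderedRing 𝕜]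
    {x c d : 𝕜} (hd : 0 < d) (h : x * c ≤ d) : x * (c / d) ≤ 1 := by
  rwa [← mul_div_assoc, div_le_one hd]

theorem deriv_qprime_general (N m p v q : ℝ) (n : ℕ)
    (hm1 : 1 < m) (hmn : m ≤ (n : ℝ)) (hnN : (n : ℝ) < N)
    (hp : 0 < p) (hv : 0 < v) (hq0 : 0 ≤ q) (hqp : q ≤ p)
    (hden : 0 < (m - 1) * p + (N - m) * q)
    (hqα : ∀ q' ∈ Set.Icc (0 : ℝ) p,
      q' * ((N - 1) * v) ≤ (m - 1) * p + (N - m) * q') :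
    HasDerivAt
      (fun x : ℝ => 1 - (1 - x * ((N - 1) * v / ((m - 1) * p + (N - m) * x))) ^ n)
      ((n : ℝ) * v * p * (N - 1) * (m - 1) *
          (1 - q * ((N - 1) * v / ((m - 1) * p + (N - m) * q))) ^ (n - 1) /
        ((m - 1) * p + (N - m) * q) ^ 2) q ∧
    0 ≤ (n : ℝ) * v * p * (N - 1) * (m - 1) *
          (1 - q * ((N - 1) * v / ((m - 1) * p + (N - m) * q))) ^ (n - 1) /
        ((m - 1) * p + (N - m) * q) ^ 2 := by
  constructor
  · exact ((hasDerivAt_mul_div_affine hden.ne').one_sub_one_sub_pow n).congr_deriv (by ring)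
  · have hN1 : 0 < N - 1 := by linarith
    have hm1' : 0 < m - 1 := by linarith
    have hbase : 0 ≤ 1 - q * ((N - 1) * v / ((m - 1) * p + (N - m) * q)) :=
      sub_nonneg.2 (mul_div_le_one_of_mul_le hden (hqα q ⟨hq0, hqp⟩))
    positivity

theorem deriv_qprime (N m p v q : ℝ) (n : ℕ)
    (hn : 1 ≤ n) (hm1 : 1 < m) (hmn : m ≤ (n : ℝ)) (hnN : (n : ℝ) < N)
    (hp : 0 < p) (hv : 0 < v) (hq0 : 0 ≤ q) (hqp : q ≤ p)
    (hden : 0 < (m - 1) * p + (N - m) * q)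
    (hqα : ∀ q' ∈ Set.Icc (0 : ℝ) p,
      q' * ((N - 1) * v) ≤ (m - 1) * p + (N - m) * q') :
    HasDerivAt
      (fun x : ℝ => 1 - (1 - x * ((N - 1) * v / ((m - 1) * p + (N - m) * x))) ^ n)
      ((n : ℝ) * v * p * (N - 1) * (m - 1) *
          (1 - q * ((N - 1) * v / ((m - 1) * p + (N - m) * q))) ^ (n - 1) /
        ((m - 1) * p + (N - m) * q) ^ 2) q ∧
    0 ≤ (n : ℝ) * v * p * (N - 1) * (m - 1) *
          (1 - q * ((N - 1) * v / ((m - 1) * p + (N - m) * q))) ^ (n - 1) /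
        ((m - 1) * p + (N - m) * q) ^ 2 :=
  deriv_qprime_general N m p v q n hm1 hmn hnN hp hv hq0 hqp hden hqα
end

section
/- Let N ≥ 1, n ≥ 1, v ∈ [0,1]. Then T_LB := N/n + n·max(1, (1 + (N−1)v)/n) ≤ N/n + n·[1 + (N/n − 1)·(1 − (1−v)^n)] =: E[T_D], for n a positive integer with n ≤ N. -/
/-!
After cancelling `N / n` it suffices to bound the maximum by the Dorfman bracket. The bracket is
at least `1` since `n ≤ N`. For the other entry, `(1 + (N - 1) v) / n ≤ 1 + (N / n - 1) v`, and the
probability `1 - (1 - v) ^ n` that a pool of size `n` tests positive is at least `v`.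
-/

lemma le_one_sub_one_sub_pow_s18 {v : ℝ} (hv0 : 0 ≤ v) (hv1 : v ≤ 1) {n : ℕ} (hn : n ≠ 0) :
    v ≤ 1 - (1 - v) ^ n := by
  have : (1 - v) ^ n ≤ 1 - v := pow_le_of_le_one (by linarith) (by linarith) hn
  linarith

lemma one_add_sub_one_mul_div_le {N v m : ℝ} (hm : 1 ≤ m) (hv : v ≤ 1) :
    (1 + (N - 1) * v) / m ≤ 1 + (N / m - 1) * v := by
  have hm0 : 0 < m := by linarith
  have hgap : 1 + (N / m - 1) * v - (1 + (N - 1) * v) / m = (m - 1) * (1 - v) / m := by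
    field_simp
    ring
  have : 0 ≤ (m - 1) * (1 - v) / m := div_nonneg (mul_nonneg (by linarith) (by linarith)) hm0.le
  linarith

theorem tlb_le_dorfman_general (N v : ℝ) (n : ℕ)
    (hn : 1 ≤ n) (hnN : (n : ℝ) ≤ N)
    (hv0 : 0 ≤ v) (hv1 : v ≤ 1) :
    N / n + n * max 1 ((1 + (N - 1) * v) / n) ≤
      N / n + n * (1 + (N / n - 1) * (1 - (1 - v) ^ n)) := by
  have hn' : (1 : ℝ) ≤ n := by exact_mod_cast hn
  have hpool : v ≤ 1 - (1 - v) ^ n := le_one_sub_one_sub_pow_s18 hv0 hv1 (by omega)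
  have hratio : 0 ≤ N / n - 1 := by
    rw [sub_nonneg, one_le_div₀ (by linarith)]
    exact hnN
  gcongr
  apply max_le
  · exact le_add_of_nonneg_right (mul_nonneg hratio (hv0.trans hpool))
  · calc (1 + (N - 1) * v) / n ≤ 1 + (N / n - 1) * v := one_add_sub_one_mul_div_le hn' hv1
      _ ≤ 1 + (N / n - 1) * (1 - (1 - v) ^ n) := by gcongr

theorem tlb_le_dorfman (N v : ℝ) (n : ℕ)
    (hN : 1 ≤ N) (hn : 1 ≤ n) (hnN : (n : ℝ) ≤ N)
    (hv0 : 0 ≤ v) (hv1 : v ≤ 1) :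
    N / n + n * max 1 ((1 + (N - 1) * v) / n) ≤
      N / n + n * (1 + (N / n - 1) * (1 - (1 - v) ^ n)) :=
  tlb_le_dorfman_general N v n hn hnN hv0 hv1
end
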